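/- Let (X, T) be a compact metric dynamical system with no fixed point. Then there exist a natural number N, a real δ > 0, and a continuous map F : X → ([0,1]^N)^ℤ satisfying F ∘ T = σ ∘ F (where σ is the shift) such that for every x ∈ X and every n ∈ ℤ, the n-th and (n+1)-st coordinates of F(x) are at Euclidean distance at least δ. -/

import Mathlib

/-!
A fixed-point free homeomorphism of a compact metric space moves every point by at least some
`ε > 0`. Covering the space by finitely many balls of radius `ε / 3` and taking an Urysohn function
for each ball (equal to `1` on it and `0` at distance `≥ 2ε / 3` from its centre) gives a map
`f : X → [0,1]^N` with `‖f x - f (T x)‖ ≥ 1`: the coordinate of a ball containing `x` is `1` at `x`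
and `0` at `T x`. The orbit map `x ↦ (f (Tⁿ x))ₙ` is then equivariant with `δ = 1`.
-/

open Metric Set

theorem exists_pos_le_dist_apply_self {X : Type*} [MetricSpace X] [CompactSpace X] {T : X → X}
    (hT : Continuous T) (hfree : ∀ x, T x ≠ x) : ∃ ε > 0, ∀ x, ε ≤ dist x (T x) := by
  obtain ⟨ε, hε, hle⟩ := isCompact_univ.exists_forall_le' (continuous_id.dist hT).continuousOn
    (a := 0) fun x _ => dist_pos.2 (hfree x).symm
  exact ⟨ε, hε, fun x => hle x (mem_univ x)⟩

theorem exists_continuous_unit_bump {X : Type*} [MetricSpace X] (c : X) {r : ℝ} (hr : 0 < r) :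
    ∃ g : X → ℝ, Continuous g ∧ (∀ x, g x ∈ Icc 0 1) ∧ (∀ x, dist x c ≤ r → g x = 1) ∧
      ∀ x, 2 * r ≤ dist x c → g x = 0 := by
  have hdisj : Disjoint (ball c (2 * r))ᶜ (closedBall c r) :=
    disjoint_compl_left_iff_subset.2 (closedBall_subset_ball (by linarith))
  obtain ⟨g, hg0, hg1, hg01⟩ :=
    exists_continuous_zero_one_of_isClosed isOpen_ball.isClosed_compl isClosed_closedBall hdisj
  exact ⟨g, g.continuous, hg01, fun x hx => hg1 hx, fun x hx => hg0 (not_lt.2 hx)⟩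

theorem exists_continuous_unitCube_separating (X : Type*) [MetricSpace X] [CompactSpace X]
    {ε : ℝ} (hε : 0 < ε) :
    ∃ (N : ℕ) (f : X → EuclideanSpace ℝ (Fin N)), Continuous f ∧ (∀ x i, f x i ∈ Icc 0 1) ∧
      ∀ x y, ε ≤ dist x y → 1 ≤ ‖f x - f y‖ := by
  obtain ⟨t, -, ht, hcover⟩ := finite_cover_balls_of_compact (isCompact_univ (X := X))
    (by positivity : 0 < ε / 3)
  obtain ⟨N, p, rfl⟩ := ht.fin_embedding
  choose g hg hg01 hg1 hg0 using
    fun i => exists_continuous_unit_bump (p i) (by positivity : 0 < ε / 3)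
  refine ⟨N, fun x => WithLp.toLp 2 fun i => g i x,
    (PiLp.continuous_toLp 2 _).comp (continuous_pi hg), fun x i => hg01 i x, fun x y hxy => ?_⟩
  obtain ⟨_, ⟨i, rfl⟩, hxi⟩ := mem_iUnion₂.1 (hcover (mem_univ x))
  have hyi : 2 * (ε / 3) ≤ dist y (p i) := by
    linarith [dist_triangle_right x y (p i), mem_ball.1 hxi]
  calc (1 : ℝ) = ‖g i x - g i y‖ := by
        rw [hg1 i x (mem_ball.1 hxi).le, hg0 i y hyi]; norm_num
    _ ≤ ‖WithLp.toLp 2 (fun j => g j x) - WithLp.toLp 2 (fun j => g j y)‖ :=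
        PiLp.norm_apply_le (WithLp.toLp 2 (fun j => g j x) - WithLp.toLp 2 (fun j => g j y)) i

section OrbitMap

variable {X Y : Type*} [TopologicalSpace X]

def orbitMap (T : X ≃ₜ X) (f : X → Y) (x : X) : ℤ → Y := fun n => f ((T ^ n) x)

theorem continuous_orbitMap [TopologicalSpace Y] (T : X ≃ₜ X) {f : X → Y} (hf : Continuous f) :
    Continuous (orbitMap T f) :=
  continuous_pi fun n => hf.comp (T ^ n).continuous

theorem orbitMap_apply_self (T : X ≃ₜ X) (f : X → Y) (x : X) :
    orbitMap T f (T x) = fun n => orbitMap T f x (n + 1) := by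
  funext n
  simp only [orbitMap, zpow_add_one, Homeomorph.mul_apply]

theorem orbitMap_add_one (T : X ≃ₜ X) (f : X → Y) (x : X) (n : ℤ) :
    orbitMap T f x (n + 1) = f (T ((T ^ n) x)) := by
  simp only [orbitMap, add_comm n 1, zpow_add, zpow_one, Homeomorph.mul_apply]

end OrbitMap

theorem universality_of_XNdelta (X : Type*) [MetricSpace X] [CompactSpace X]
    (T : X ≃ₜ X) (hfree : ∀ x : X, T x ≠ x) :
    ∃ (N : ℕ) (δ : ℝ) (F : X → (ℤ → EuclideanSpace ℝ (Fin N))), 0 < δ ∧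
      Continuous F ∧
      (∀ (x : X) (n : ℤ) (i : Fin N), F x n i ∈ Set.Icc (0:ℝ) 1) ∧
      (∀ x : X, F (T x) = fun n => F x (n + 1)) ∧
      (∀ (x : X) (n : ℤ), δ ≤ ‖F x n - F x (n + 1)‖) := by
  obtain ⟨ε, hε, hdisp⟩ := exists_pos_le_dist_apply_self T.continuous hfree
  obtain ⟨N, f, hf, hf01, hsep⟩ := exists_continuous_unitCube_separating X hε
  refine ⟨N, 1, orbitMap T f, one_pos, continuous_orbitMap T hf, fun x n i => hf01 _ i,
    orbitMap_apply_self T f, fun x n => ?_⟩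
  rw [orbitMap_add_one]
  exact hsep _ _ (hdisp _)
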